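/- arXiv:1706.06895 — 2 statements merged into one kernel-verified Lean document; each statement's English description precedes it below -/
import Mathlib

section
/- With the notation of the piecewise affine interpolated form a_Λ: for all t, s ∈ [0,T] with |t−s| > 2|Λ| and all u,v ∈ V, |a_Λ(t;u,v) − a_Λ(s;u,v)| ≤ 2ω(2|t−s|)‖u‖‖v‖, where ω is extended to [0,2T] by ω(t) = ω(T) for t ≥ T. -/
/-!
On a cell `[λ_k, λ_{k+1}]` the interpolant is a convex combination `α a_k + (1 - α) a_{k+1}`.
Translating the integral shows that averages over two cells whose left ends are `d` apart differ
by at most `ω(d)‖u‖‖v‖`. Writing the difference of two such convex combinations as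
`α (x₀ - y₀) + (1 - α) (x₁ - y₁) + (α - β) (y₀ - y₁)` bounds it by twice the largest of the three
differences, and since `|t - s| > 2|Λ|` all the cells involved start within
`|t - s| + |Λ| ≤ 2|t - s|` of each other.
-/

open Set MeasureTheory intervalIntegral

lemma norm_integral_sub_integral_add_le {E : Type*} [NormedAddCommGroup E] [NormedSpace ℝ E]
    {f : ℝ → E} {a b c C : ℝ} (hf : IntervalIntegrable f volume a b)
    (hfc : IntervalIntegrable f volume (a + c) (b + c)) (hC : ∀ x, ‖f x - f (x + c)‖ ≤ C) :
    ‖(∫ x in a..b, f x) - ∫ x in (a + c)..(b + c), f x‖ ≤ C * |b - a| := by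
  have hshift : IntervalIntegrable (fun x => f (x + c)) volume a b := by
    simpa using hfc.comp_add_right c
  rw [← integral_comp_add_right, ← integral_sub hf hshift]
  exact norm_integral_le_of_norm_le_const fun x _ => hC x

lemma norm_average_sub_average_le {f : ℝ → ℂ} {ρ : ℝ → ℝ} (hρ : ∀ t s, ‖f t - f s‖ ≤ ρ |t - s|)
    {δ : ℝ} (hδ : 0 < δ) {lam : ℕ → ℝ} (hunif : ∀ k, lam (k + 1) - lam k = δ)
    (hint : ∀ k, IntervalIntegrable f volume (lam k) (lam (k + 1)))
    {A : ℕ → ℂ} (hA : ∀ k, A k = (δ : ℂ)⁻¹ * ∫ r in lam k..lam (k + 1), f r) (i j : ℕ) :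
    ‖A i - A j‖ ≤ ρ |lam i - lam j| := by
  set c := lam j - lam i
  have hj : lam j = lam i + c := by ring
  have hj1 : lam (j + 1) = lam (i + 1) + c := by linarith [hunif i, hunif j]
  have hshift := norm_integral_sub_integral_add_le (hint i) (hj ▸ hj1 ▸ hint j)
    (C := ρ |c|) fun x => by simpa [abs_sub_comm] using hρ x (x + c)
  rw [← hj, ← hj1, hunif i, abs_of_pos hδ] at hshift
  rw [hA, hA, ← mul_sub, norm_mul, norm_inv, Complex.norm_real, Real.norm_eq_abs, abs_of_pos hδ,
    abs_sub_comm]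
  calc δ⁻¹ * ‖(∫ r in lam i..lam (i + 1), f r) - ∫ r in lam j..lam (j + 1), f r‖
      ≤ δ⁻¹ * (ρ |c| * δ) := by gcongr
    _ = ρ |c| := by field_simp

lemma norm_convexComb_sub_convexComb_le {E : Type*} [NormedAddCommGroup E] [NormedSpace ℝ E]
    {x₀ x₁ y₀ y₁ : E} {α β M : ℝ} (hα : α ∈ Icc (0 : ℝ) 1) (hβ : β ∈ Icc (0 : ℝ) 1)
    (h₀ : ‖x₀ - y₀‖ ≤ M) (h₁ : ‖x₁ - y₁‖ ≤ M) (hy : ‖y₀ - y₁‖ ≤ M) :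
    ‖(α • x₀ + (1 - α) • x₁) - (β • y₀ + (1 - β) • y₁)‖ ≤ 2 * M := by
  have hdecomp : (α • x₀ + (1 - α) • x₁) - (β • y₀ + (1 - β) • y₁)
      = α • (x₀ - y₀) + (1 - α) • (x₁ - y₁) + (α - β) • (y₀ - y₁) := by
    simp only [smul_sub, sub_smul, one_smul]
    abel
  have hαβ : |α - β| ≤ 1 := abs_le.2 ⟨by linarith [hα.1, hβ.2], by linarith [hα.2, hβ.1]⟩
  rw [hdecomp]
  calc _ ≤ |α| * ‖x₀ - y₀‖ + |1 - α| * ‖x₁ - y₁‖ + |α - β| * ‖y₀ - y₁‖ := by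
        refine norm_add₃_le.trans ?_
        simp only [norm_smul, Real.norm_eq_abs, le_refl]
    _ ≤ α * M + (1 - α) * M + 1 * M := by
        have hα₀ : 0 ≤ α := hα.1
        have hα₁ : 0 ≤ 1 - α := sub_nonneg.2 hα.2
        rw [abs_of_nonneg hα₀, abs_of_nonneg hα₁]
        have hM : 0 ≤ M := (norm_nonneg _).trans hy
        gcongr
    _ = 2 * M := by ring

lemma eq_nat_mul_of_sub_eq {lam : ℕ → ℝ} {δ : ℝ} (h0 : lam 0 = 0)
    (hunif : ∀ k, lam (k + 1) - lam k = δ) (k : ℕ) : lam k = k * δ := by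
  induction k with
  | zero => simp [h0]
  | succ k ih => push_cast; linarith [hunif k]

lemma exists_mem_Icc_of_sub_eq {lam : ℕ → ℝ} {δ r : ℝ} (hδ : 0 < δ) (h0 : lam 0 = 0)
    (hunif : ∀ k, lam (k + 1) - lam k = δ) (hr : 0 ≤ r) :
    ∃ k, r ∈ Icc (lam k) (lam (k + 1)) := by
  refine ⟨⌊r / δ⌋₊, ?_⟩
  simp only [eq_nat_mul_of_sub_eq h0 hunif, Nat.cast_add, Nat.cast_one]
  exact ⟨(le_div_iff₀ hδ).1 (Nat.floor_le (div_nonneg hr hδ.le)),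
    (div_le_iff₀ hδ).1 (Nat.lt_floor_add_one _).le⟩

lemma ofReal_div_mul_add_ofReal_div_mul_eq_smul {a b δ t : ℝ} (hδ : 0 < δ) (hab : b - a = δ) (x y : ℂ) :
    (((b - t) / δ : ℝ) : ℂ) * x + (((t - a) / δ : ℝ) : ℂ) * y
      = ((b - t) / δ) • x + (1 - (b - t) / δ) • y := by
  have h : (t - a) / δ = 1 - (b - t) / δ := by
    field_simp
    linarith
  rw [h, Complex.real_smul, Complex.real_smul]

lemma div_mem_Icc_zero_one_of_mem_Icc {a b δ t : ℝ} (hδ : 0 < δ) (hab : b - a = δ)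
    (ht : t ∈ Icc a b) : (b - t) / δ ∈ Icc (0 : ℝ) 1 :=
  ⟨div_nonneg (by linarith [ht.2]) hδ.le, (div_le_one hδ).2 (by linarith [ht.1])⟩

theorem norm_interpolant_sub_le {f : ℝ → ℂ} {ρ : ℝ → ℝ} (hρmono : Monotone ρ)
    (hρ : ∀ t s, ‖f t - f s‖ ≤ ρ |t - s|) {δ : ℝ} (hδ : 0 < δ) {lam : ℕ → ℝ} (h0 : lam 0 = 0)
    (hunif : ∀ k, lam (k + 1) - lam k = δ)
    (hint : ∀ k, IntervalIntegrable f volume (lam k) (lam (k + 1)))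
    {A : ℕ → ℂ} (hA : ∀ k, A k = (δ : ℂ)⁻¹ * ∫ r in lam k..lam (k + 1), f r)
    {F : ℝ → ℂ} (hF : ∀ k, ∀ t ∈ Icc (lam k) (lam (k + 1)),
      F t = (((lam (k + 1) - t) / δ : ℝ) : ℂ) * A k + (((t - lam k) / δ : ℝ) : ℂ) * A (k + 1))
    {s t : ℝ} (hs : 0 ≤ s) (hst : 2 * δ < t - s) :
    ‖F t - F s‖ ≤ 2 * ρ (2 * (t - s)) := by
  obtain ⟨k, hk⟩ := exists_mem_Icc_of_sub_eq hδ h0 hunif (show 0 ≤ t by linarith)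
  obtain ⟨l, hl⟩ := exists_mem_Icc_of_sub_eq hδ h0 hunif hs
  have hA' := norm_average_sub_average_le hρ hδ hunif hint hA
  have hkl : |lam k - lam l| ≤ 2 * (t - s) := abs_le.2
    ⟨by linarith [hk.2, hl.1, hunif k], by linarith [hk.1, hl.2, hunif l]⟩
  rw [hF k t hk, hF l s hl, ofReal_div_mul_add_ofReal_div_mul_eq_smul hδ (hunif k),
    ofReal_div_mul_add_ofReal_div_mul_eq_smul hδ (hunif l)]
  refine norm_convexComb_sub_convexComb_le (div_mem_Icc_zero_one_of_mem_Icc hδ (hunif k) hk)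
    (div_mem_Icc_zero_one_of_mem_Icc hδ (hunif l) hl) ?_ ?_ ?_
  · exact (hA' k l).trans (hρmono hkl)
  · have hshift : lam (k + 1) - lam (l + 1) = lam k - lam l := by linarith [hunif k, hunif l]
    exact (hA' (k + 1) (l + 1)).trans (hρmono (hshift ▸ hkl))
  · refine (hA' l (l + 1)).trans (hρmono ?_)
    rw [abs_sub_comm, hunif l, abs_of_pos hδ]
    linarith

theorem stmt8_general {V : Type*} [NormedAddCommGroup V] [NormedSpace ℂ V]
    (T δ : ℝ) (hδ : 0 < δ)
    (lam : ℕ → ℝ) (hlam0 : lam 0 = 0)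
    (hunif : ∀ k, lam (k + 1) - lam k = δ)
    (a : ℝ → V → V → ℂ)
    (haint : ∀ k (u v : V), IntervalIntegrable (fun r => a r u v) volume (lam k) (lam (k + 1)))
    (ω : ℝ → ℝ) (hmono : Monotone ω)
    (hω : ∀ t s (u v : V), ‖a t u v - a s u v‖ ≤ ω |t - s| * ‖u‖ * ‖v‖)
    (aK : ℕ → V → V → ℂ)
    (haK : ∀ k (u v : V), aK k u v = (δ : ℂ)⁻¹ * ∫ r in lam k..lam (k + 1), a r u v)
    (aΛ : ℝ → V → V → ℂ)
    (haΛ : ∀ k, ∀ t ∈ Icc (lam k) (lam (k + 1)), ∀ u v : V,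
      aΛ t u v = (((lam (k + 1) - t) / δ : ℝ) : ℂ) * aK k u v +
        (((t - lam k) / δ : ℝ) : ℂ) * aK (k + 1) u v) :
    ∀ t ∈ Icc (0 : ℝ) T, ∀ s ∈ Icc (0 : ℝ) T, 2 * δ < |t - s| → ∀ u v : V,
      ‖aΛ t u v - aΛ s u v‖ ≤ 2 * ω (2 * |t - s|) * ‖u‖ * ‖v‖ := by
  intro t ht s hs hts u v
  wlog hst : s ≤ t generalizing t s
  · rw [norm_sub_rev, abs_sub_comm]
    exact this s hs t ht (by rwa [abs_sub_comm]) (le_of_not_ge hst)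
  have hmod : Monotone fun r => ω r * ‖u‖ * ‖v‖ := fun x y hxy =>
    mul_le_mul_of_nonneg_right (mul_le_mul_of_nonneg_right (hmono hxy) (norm_nonneg u))
      (norm_nonneg v)
  rw [abs_of_nonneg (sub_nonneg.2 hst)] at hts ⊢
  rw [mul_assoc 2, mul_assoc 2]
  exact norm_interpolant_sub_le hmod (fun t s => hω t s u v) hδ hlam0 hunif (haint · u v)
    (haK · u v) (haΛ · · · u v) hs.1 hts

/-- For the piecewise affine interpolation `a_Λ` of interval averages over a uniform
subdivision of mesh `δ`: for all `t, s ∈ [0,T]` with `|t − s| > 2δ`,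
`|a_Λ(t;u,v) − a_Λ(s;u,v)| ≤ 2ω(2|t−s|)‖u‖‖v‖`. -/
theorem stmt8 {V : Type*} [NormedAddCommGroup V] [NormedSpace ℂ V]
    (T δ : ℝ) (hT : 0 < T) (hδ : 0 < δ) (n : ℕ)
    (lam : ℕ → ℝ) (hlam0 : lam 0 = 0) (hlamT : lam (n + 1) = T)
    (hunif : ∀ k, lam (k + 1) - lam k = δ)
    (a : ℝ → V → V → ℂ)
    (haint : ∀ k (u v : V), IntervalIntegrable (fun r => a r u v) volume (lam k) (lam (k + 1)))
    (ω : ℝ → ℝ) (hmono : Monotone ω)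
    (hω : ∀ t s (u v : V), ‖a t u v - a s u v‖ ≤ ω |t - s| * ‖u‖ * ‖v‖)
    (aK : ℕ → V → V → ℂ)
    (haK : ∀ k (u v : V), aK k u v = (δ : ℂ)⁻¹ * ∫ r in lam k..lam (k + 1), a r u v)
    (aΛ : ℝ → V → V → ℂ)
    (haΛ : ∀ k, ∀ t ∈ Icc (lam k) (lam (k + 1)), ∀ u v : V,
      aΛ t u v = (((lam (k + 1) - t) / δ : ℝ) : ℂ) * aK k u v +
        (((t - lam k) / δ : ℝ) : ℂ) * aK (k + 1) u v) :
    ∀ t ∈ Icc (0 : ℝ) T, ∀ s ∈ Icc (0 : ℝ) T, 2 * δ < |t - s| → ∀ u v : V,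
      ‖aΛ t u v - aΛ s u v‖ ≤ 2 * ω (2 * |t - s|) * ‖u‖ * ‖v‖ :=
  stmt8_general T δ hδ lam hlam0 hunif a haint ω hmono hω aK haK aΛ haΛ
end

section
/- Let a : [0,T] × V × V → ℂ satisfy |a(t;u,v) − a(s;u,v)| ≤ ω(|t−s|)‖u‖‖v‖ with ω non-decreasing, and let a_Λ be the piecewise affine interpolation of the interval averages a_k over a uniform subdivision of mesh |Λ|. Then for every t ∈ [0,T] and u,v ∈ V, |a_Λ(t;u,v) − a(t;u,v)| ≤ 2ω(2|Λ|)‖u‖‖v‖. -/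
open Set MeasureTheory intervalIntegral

/-! On the cell `[λ_k, λ_{k+1}]` containing `t`, `a_Λ(t)` is a convex combination of the averages
`a_k` and `a_{k+1}`. Every point of their two intervals lies within `2|Λ|` of `t`, so each average,
and hence the convex combination, lies in the closed ball of radius `ω(2|Λ|)‖u‖‖v‖` about `a(t)`. -/

theorem exists_mem_Icc_succ_of_mem_Icc {lam : ℕ → ℝ} {t : ℝ} :
    ∀ n, t ∈ Icc (lam 0) (lam (n + 1)) → ∃ k, t ∈ Icc (lam k) (lam (k + 1))
  | 0, ht => ⟨0, ht⟩
  | n + 1, ht => by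
    rcases le_or_gt t (lam (n + 1)) with hle | hgt
    · exact exists_mem_Icc_succ_of_mem_Icc n ⟨ht.1, hle⟩
    · exact ⟨n + 1, hgt.le, ht.2⟩

theorem norm_inv_smul_integral_sub_le {E : Type*} [NormedAddCommGroup E] [NormedSpace ℝ E]
    [CompleteSpace E] {f : ℝ → E} {α β C : ℝ} (c : E) (hαβ : α < β)
    (hf : IntervalIntegrable f volume α β) (hC : ∀ r ∈ Icc α β, ‖f r - c‖ ≤ C) :
    ‖(β - α)⁻¹ • (∫ r in α..β, f r) - c‖ ≤ C := by
  have hlen : 0 < β - α := sub_pos.2 hαβ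
  have hsub : (β - α)⁻¹ • (∫ r in α..β, f r) - c = (β - α)⁻¹ • ∫ r in α..β, (f r - c) := by
    rw [integral_sub hf intervalIntegrable_const, intervalIntegral.integral_const, smul_sub,
      inv_smul_smul₀ hlen.ne']
  have hbound : ‖∫ r in α..β, (f r - c)‖ ≤ C * |β - α| :=
    norm_integral_le_of_norm_le_const fun r hr =>
      hC r (Ioc_subset_Icc_self (by rwa [uIoc_of_le hαβ.le] at hr))
  rw [abs_of_pos hlen] at hbound
  rw [hsub, norm_smul, Real.norm_of_nonneg (inv_nonneg.2 hlen.le)]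
  calc (β - α)⁻¹ * ‖∫ r in α..β, (f r - c)‖ ≤ (β - α)⁻¹ * (C * (β - α)) := by gcongr
    _ = C := by field_simp

theorem norm_div_smul_add_div_smul_sub_le {E : Type*} [SeminormedAddCommGroup E] [NormedSpace ℝ E]
    {α β t M : ℝ} {x y z : E} (hαβ : α < β) (ht : t ∈ Icc α β)
    (hx : ‖x - z‖ ≤ M) (hy : ‖y - z‖ ≤ M) :
    ‖((β - t) / (β - α)) • x + ((t - α) / (β - α)) • y - z‖ ≤ M := by
  have hlen : 0 < β - α := sub_pos.2 hαβ
  rw [← dist_eq_norm] at hx hy ⊢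
  refine convex_closedBall z M hx hy (div_nonneg (by linarith [ht.2]) hlen.le)
    (div_nonneg (by linarith [ht.1]) hlen.le) ?_
  field_simp
  ring

theorem stmt9_general {V : Type*} [NormedAddCommGroup V] [NormedSpace ℂ V]
    (T δ : ℝ) (hδ : 0 < δ) (n : ℕ)
    (lam : ℕ → ℝ) (hlam0 : lam 0 = 0) (hlamT : lam (n + 1) = T)
    (hunif : ∀ k, lam (k + 1) - lam k = δ)
    (a : ℝ → V → V → ℂ)
    (haint : ∀ k (u v : V), IntervalIntegrable (fun r => a r u v) volume (lam k) (lam (k + 1)))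
    (ω : ℝ → ℝ) (hmono : Monotone ω)
    (hω : ∀ t s (u v : V), ‖a t u v - a s u v‖ ≤ ω |t - s| * ‖u‖ * ‖v‖)
    (aK : ℕ → V → V → ℂ)
    (haK : ∀ k (u v : V), aK k u v = (δ : ℂ)⁻¹ * ∫ r in lam k..lam (k + 1), a r u v)
    (aΛ : ℝ → V → V → ℂ)
    (haΛ : ∀ k, ∀ t ∈ Icc (lam k) (lam (k + 1)), ∀ u v : V,
      aΛ t u v = (((lam (k + 1) - t) / δ : ℝ) : ℂ) * aK k u v +
        (((t - lam k) / δ : ℝ) : ℂ) * aK (k + 1) u v) :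
    ∀ t ∈ Icc (0 : ℝ) T, ∀ u v : V,
      ‖aΛ t u v - a t u v‖ ≤ 2 * ω (2 * δ) * ‖u‖ * ‖v‖ := by
  intro t ht u v
  obtain ⟨k, hk⟩ := exists_mem_Icc_succ_of_mem_Icc n (hlam0 ▸ hlamT ▸ ht)
  have hstep : ∀ j, lam j < lam (j + 1) := fun j => by linarith [hunif j]
  have hmodulus : ∀ r, |r - t| ≤ 2 * δ → ‖a r u v - a t u v‖ ≤ ω (2 * δ) * ‖u‖ * ‖v‖ :=
    fun r hr => (hω r t u v).trans (by gcongr; exact hmono hr)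
  have haverage : ∀ j, (∀ r ∈ Icc (lam j) (lam (j + 1)), |r - t| ≤ 2 * δ) →
      ‖aK j u v - a t u v‖ ≤ ω (2 * δ) * ‖u‖ * ‖v‖ := fun j hj => by
    have := norm_inv_smul_integral_sub_le (a t u v) (hstep j) (haint j u v)
      fun r hr => hmodulus r (hj r hr)
    rw [hunif j, Complex.real_smul, Complex.ofReal_inv] at this
    rwa [haK]
  have hinterp : ‖aΛ t u v - a t u v‖ ≤ ω (2 * δ) * ‖u‖ * ‖v‖ := by
    have := norm_div_smul_add_div_smul_sub_le (hstep k) hk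
      (haverage k fun r hr => abs_sub_le_iff.2 ⟨by linarith [hunif k, hr.2, hk.1],
        by linarith [hunif k, hr.1, hk.2]⟩)
      (haverage (k + 1) fun r hr => abs_sub_le_iff.2
        ⟨by linarith [hunif k, hunif (k + 1), hr.2, hk.1], by linarith [hr.1, hk.2]⟩)
    rw [hunif k, Complex.real_smul, Complex.real_smul] at this
    rwa [haΛ k t hk]
  have hnonneg : 0 ≤ ω (2 * δ) * ‖u‖ * ‖v‖ :=
    (norm_nonneg _).trans (hmodulus t (by simp [hδ.le]))
  linarith

/-- The piecewise affine interpolation `a_Λ` of the interval averages of `a` over a uniform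
subdivision of mesh `δ` satisfies `|a_Λ(t;u,v) − a(t;u,v)| ≤ 2ω(2δ)‖u‖‖v‖` for all
`t ∈ [0,T]`. -/
theorem stmt9 {V : Type*} [NormedAddCommGroup V] [NormedSpace ℂ V]
    (T δ : ℝ) (hT : 0 < T) (hδ : 0 < δ) (n : ℕ)
    (lam : ℕ → ℝ) (hlam0 : lam 0 = 0) (hlamT : lam (n + 1) = T)
    (hunif : ∀ k, lam (k + 1) - lam k = δ)
    (a : ℝ → V → V → ℂ)
    (haint : ∀ k (u v : V), IntervalIntegrable (fun r => a r u v) volume (lam k) (lam (k + 1)))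
    (ω : ℝ → ℝ) (hmono : Monotone ω)
    (hω : ∀ t s (u v : V), ‖a t u v - a s u v‖ ≤ ω |t - s| * ‖u‖ * ‖v‖)
    (aK : ℕ → V → V → ℂ)
    (haK : ∀ k (u v : V), aK k u v = (δ : ℂ)⁻¹ * ∫ r in lam k..lam (k + 1), a r u v)
    (aΛ : ℝ → V → V → ℂ)
    (haΛ : ∀ k, ∀ t ∈ Icc (lam k) (lam (k + 1)), ∀ u v : V,
      aΛ t u v = (((lam (k + 1) - t) / δ : ℝ) : ℂ) * aK k u v +
        (((t - lam k) / δ : ℝ) : ℂ) * aK (k + 1) u v) :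
    ∀ t ∈ Icc (0 : ℝ) T, ∀ u v : V,
      ‖aΛ t u v - a t u v‖ ≤ 2 * ω (2 * δ) * ‖u‖ * ‖v‖ :=
  stmt9_general T δ hδ n lam hlam0 hlamT hunif a haint ω hmono hω aK haK aΛ haΛ
end
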